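/- Assume n = |p₁q₂ − p₂q₁| ≠ 0. Then the order of the image of (0, 1) in the quotient group (ℤ × ℤ)/Λ equals n / gcd(|p₁|, |p₂|), and the index in (ℤ × ℤ)/Λ of the cyclic subgroup generated by the image of (0, 1) equals gcd(|p₁|, |p₂|). (In the language of the paper: the translation v induces a permutation with μ_p = gcd(|p₁|, |p₂|) cycles, each of length n/μ_p.) -/

import Mathlib

/-! Write `pᵢ = aᵢ g` with `g = gcd(p₁, p₂)` and `a₁, a₂` coprime. A vector `(0, k)` lies in `Λ`
iff `k = a q₁ + b q₂` for some `a, b` with `a a₁ + b a₂ = 0`, i.e. `(a, b) = t (a₂, -a₁)`; so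
`(0, k) ∈ Λ` iff `a₁ q₂ - a₂ q₁ = ±n / g` divides `k`, which gives the order of `(0, 1)`.
For the index: `⟨(0, 1)⟩ + Λ` is the preimage under the first projection of the image of `Λ`,
which is `p₁ℤ + p₂ℤ = gℤ`. -/

open AddSubgroup

theorem IsCoprime.exists_eq_mul_of_mul_add_mul_eq_zero {a b p q : ℤ} (h : IsCoprime p q)
    (he : a * p + b * q = 0) : ∃ t : ℤ, a = t * q ∧ b = -(t * p) := by
  obtain ⟨u, v, huv⟩ := h
  exact ⟨a * v - b * u, by linear_combination u * he - a * huv,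
    by linear_combination v * he - b * huv⟩

theorem addOrderOf_eq_natAbs_of_forall_zsmul_eq_zero_iff {G : Type*} [AddGroup G] {x : G}
    {m : ℤ} (h : ∀ k : ℤ, k • x = 0 ↔ m ∣ k) : addOrderOf x = m.natAbs := by
  have hord : (addOrderOf x : ℤ) ∣ m := addOrderOf_dvd_iff_zsmul_eq_zero.mpr ((h m).mpr dvd_rfl)
  have hm : m ∣ addOrderOf x := (h _).mp (addOrderOf_dvd_iff_zsmul_eq_zero.mp dvd_rfl)
  exact Nat.dvd_antisymm (by simpa using Int.natAbs_dvd_natAbs.mpr hord)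
    (by simpa using Int.natAbs_dvd_natAbs.mpr hm)

theorem zmultiples_zero_one : zmultiples ((0, 1) : ℤ × ℤ) = (AddMonoidHom.fst ℤ ℤ).ker := by
  ext ⟨a, b⟩
  simp [mem_zmultiples_iff, Prod.ext_iff, eq_comm, AddSubgroup.mem_prod]

theorem index_zmultiples_mk_zero_one (Λ : AddSubgroup (ℤ × ℤ)) :
    (zmultiples (QuotientAddGroup.mk ((0, 1) : ℤ × ℤ) : (ℤ × ℤ) ⧸ Λ)).index
      = (Λ.map (AddMonoidHom.fst ℤ ℤ)).index := by
  have hsurj : Function.Surjective (AddMonoidHom.fst ℤ ℤ) := Prod.fst_surjective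
  rw [← QuotientAddGroup.mk'_apply, ← AddMonoidHom.map_zmultiples,
    ← index_comap_of_surjective _ (QuotientAddGroup.mk'_surjective Λ),
    ← index_comap_of_surjective _ hsurj, comap_map_eq, comap_map_eq, QuotientAddGroup.ker_mk',
    zmultiples_zero_one, sup_comm]

theorem mk_zero_mem_closure_pair_iff {g a₁ a₂ q₁ q₂ : ℤ} (hg : g ≠ 0) (hco : IsCoprime a₁ a₂)
    (k : ℤ) : ((0, k) : ℤ × ℤ) ∈ AddSubgroup.closure {((a₁ * g, q₁) : ℤ × ℤ), (a₂ * g, q₂)}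
      ↔ a₁ * q₂ - a₂ * q₁ ∣ k := by
  simp only [mem_closure_pair, Prod.ext_iff, Prod.fst_add, Prod.snd_add, Prod.smul_fst,
    Prod.smul_snd, smul_eq_mul]
  constructor
  · rintro ⟨a, b, hfst, rfl⟩
    have hsum : a * a₁ + b * a₂ = 0 :=
      (mul_eq_zero.mp (show (a * a₁ + b * a₂) * g = 0 by linear_combination hfst)).resolve_right hg
    obtain ⟨t, rfl, rfl⟩ := hco.exists_eq_mul_of_mul_add_mul_eq_zero hsum
    exact ⟨-t, by ring⟩
  · rintro ⟨s, rfl⟩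
    exact ⟨-(s * a₂), s * a₁, by ring, by ring⟩

theorem addOrderOf_mk_zero_one_of_isCoprime {g a₁ a₂ q₁ q₂ : ℤ} (hg : g ≠ 0)
    (hco : IsCoprime a₁ a₂) :
    addOrderOf (QuotientAddGroup.mk ((0, 1) : ℤ × ℤ) :
        (ℤ × ℤ) ⧸ AddSubgroup.closure {((a₁ * g, q₁) : ℤ × ℤ), (a₂ * g, q₂)})
      = (a₁ * q₂ - a₂ * q₁).natAbs := by
  refine addOrderOf_eq_natAbs_of_forall_zsmul_eq_zero_iff fun k => ?_
  rw [← QuotientAddGroup.mk_zsmul, QuotientAddGroup.eq_zero_iff, Prod.smul_mk, smul_zero,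
    smul_eq_mul, mul_one]
  exact mk_zero_mem_closure_pair_iff hg hco k

theorem addOrderOf_mk_zero_one {p₁ q₁ p₂ q₂ : ℤ} (hp : Int.gcd p₁ p₂ ≠ 0) :
    addOrderOf (QuotientAddGroup.mk ((0, 1) : ℤ × ℤ) :
        (ℤ × ℤ) ⧸ AddSubgroup.closure {((p₁, q₁) : ℤ × ℤ), (p₂, q₂)})
      = (p₁ * q₂ - p₂ * q₁).natAbs / Int.gcd p₁ p₂ := by
  obtain ⟨a₁, a₂, hco, h₁, h₂⟩ := Int.exists_gcd_one (Nat.pos_of_ne_zero hp)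
  generalize Int.gcd p₁ p₂ = g at hp h₁ h₂ ⊢
  subst h₁ h₂
  have hg : (g : ℤ) ≠ 0 := Int.natCast_ne_zero.mpr hp
  rw [addOrderOf_mk_zero_one_of_isCoprime hg (Int.isCoprime_iff_gcd_eq_one.mpr hco),
    show a₁ * g * q₂ - a₂ * g * q₁ = g * (a₁ * q₂ - a₂ * q₁) by ring, Int.natAbs_mul,
    Int.natAbs_natCast, Nat.mul_div_cancel_left _ (Nat.pos_of_ne_zero hp)]

theorem index_zmultiples_mk_zero_one_closure_pair (p₁ q₁ p₂ q₂ : ℤ) :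
    (zmultiples (QuotientAddGroup.mk ((0, 1) : ℤ × ℤ) :
        (ℤ × ℤ) ⧸ AddSubgroup.closure {((p₁, q₁) : ℤ × ℤ), (p₂, q₂)})).index
      = Int.gcd p₁ p₂ := by
  rw [index_zmultiples_mk_zero_one, AddMonoidHom.map_closure, Set.image_pair,
    AddMonoidHom.coe_fst, Int.closure_eq_zmultiples, Int.index_zmultiples, Int.natAbs_natCast]

/-- Let `Λ ≤ ℤ × ℤ` be generated by `(p₁, q₁)` and `(p₂, q₂)`, and assume
`n = |p₁q₂ − p₂q₁| ≠ 0`.  Then the order of the image of `(0, 1)` in `(ℤ × ℤ)/Λ`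
equals `n / gcd(|p₁|, |p₂|)`, and the index in `(ℤ × ℤ)/Λ` of the cyclic subgroup
generated by the image of `(0, 1)` equals `gcd(|p₁|, |p₂|)`. -/
theorem stmt7 (p₁ q₁ p₂ q₂ : ℤ) (hn : p₁ * q₂ - p₂ * q₁ ≠ 0) :
    addOrderOf ((QuotientAddGroup.mk ((0, 1) : ℤ × ℤ)) :
        (ℤ × ℤ) ⧸ AddSubgroup.closure {((p₁, q₁) : ℤ × ℤ), (p₂, q₂)})
      = (p₁ * q₂ - p₂ * q₁).natAbs / Nat.gcd p₁.natAbs p₂.natAbs ∧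
    (AddSubgroup.zmultiples ((QuotientAddGroup.mk ((0, 1) : ℤ × ℤ)) :
        (ℤ × ℤ) ⧸ AddSubgroup.closure {((p₁, q₁) : ℤ × ℤ), (p₂, q₂)})).index
      = Nat.gcd p₁.natAbs p₂.natAbs := by
  have hp : Int.gcd p₁ p₂ ≠ 0 := by
    contrapose! hn
    obtain ⟨rfl, rfl⟩ := Int.gcd_eq_zero_iff.mp hn
    ring
  exact ⟨addOrderOf_mk_zero_one hp, index_zmultiples_mk_zero_one_closure_pair p₁ q₁ p₂ q₂⟩
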